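/- Let R be a strongly σ-symmetric ring and I a one-sided annihilator ideal of R (i.e., I = r_R(S) or I = l_R(S) for some subset S ⊆ R) with σ(I) ⊆ I. Then R/I is strongly σ̄-symmetric, where σ̄ is the induced endomorphism on R/I. -/
import Mathlib


/-- The coefficient of `x^n` in the product of two skew polynomials in `R[x;σ]`
(where `x·r = σ(r)·x`), given their coefficient functions. -/
def skewMul {R : Type*} [Ring R] (σ : R →+* R) (p q : ℕ → R) : ℕ → R :=
  fun n => ∑ i ∈ Finset.range (n + 1), p i * (⇑σ)^[i] (q (n - i))

/-- A ring is symmetric if `abc = 0` implies `acb = 0`. -/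
def SymmetricRing (R : Type*) [Ring R] : Prop :=
  ∀ a b c : R, a * b * c = 0 → a * c * b = 0

/-- `R` is strongly `σ`-symmetric if the skew polynomial ring `R[x;σ]` is symmetric,
expressed via the coefficientwise skew convolution. -/
def StronglySkewSymmetric (R : Type*) [Ring R] (σ : R →+* R) : Prop :=
  ∀ p q r : Polynomial R,
    skewMul σ (skewMul σ p.coeff q.coeff) r.coeff = 0 →
    skewMul σ (skewMul σ p.coeff r.coeff) q.coeff = 0

/-- `R/I` is strongly symmetric with respect to the endomorphism induced by `σ`
(expressed without forming the quotient: all coefficient identities hold modulo `I`). -/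
def StronglySkewSymmetricMod {R : Type*} [Ring R] (σ : R →+* R) (I : Set R) : Prop :=
  ∀ p q r : Polynomial R,
    (∀ n, skewMul σ (skewMul σ p.coeff q.coeff) r.coeff n ∈ I) →
    ∀ n, skewMul σ (skewMul σ p.coeff r.coeff) q.coeff n ∈ I

open Polynomial

lemma skewMul_C_left {R : Type*} [Ring R] (σ : R →+* R) (s : R) (f : ℕ → R) (n : ℕ) :
    skewMul σ (C s).coeff f n = s * f n := by
  unfold skewMul
  rw [Finset.sum_eq_single 0]
  · simp
  · intro i hi hne
    rw [Polynomial.coeff_C, if_neg hne, zero_mul]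
  · intro hc
    exact absurd (Finset.mem_range.mpr (Nat.succ_pos n)) hc

lemma skewMul_C_left' {R : Type*} [Ring R] (σ : R →+* R) (s : R) (f : ℕ → R) :
    skewMul σ (C s).coeff f = fun n => s * f n :=
  funext fun n => skewMul_C_left σ s f n

lemma skewMul_smul_left {R : Type*} [Ring R] (σ : R →+* R) (s : R) (f g : ℕ → R) (n : ℕ) :
    skewMul σ (fun m => s * f m) g n = s * skewMul σ f g n := by
  unfold skewMul
  rw [Finset.mul_sum]
  exact Finset.sum_congr rfl fun i _ => mul_assoc _ _ _

lemma skewMul_Cmul {R : Type*} [Ring R] (σ : R →+* R) (s : R) (p : Polynomial R)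
    (g : ℕ → R) : skewMul σ (C s * p).coeff g = fun n => s * skewMul σ p.coeff g n := by
  funext n
  have hc : (C s * p).coeff = fun m => s * p.coeff m := funext fun m => p.coeff_C_mul
  rw [hc, skewMul_smul_left]

/-- The main argument for the case `I = r_R(S)`. -/
lemma right_ann_case {R : Type*} [Ring R] (σ : R →+* R) (h : StronglySkewSymmetric R σ)
    (S I : Set R) (hI : ∀ c : R, c ∈ I ↔ ∀ s ∈ S, s * c = 0) :
    StronglySkewSymmetricMod σ I := by
  intro p q r hpq n
  rw [hI]
  intro s hs
  have key := h (C s * p) q r ?_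
  · have hk := congrFun key n
    rw [skewMul_Cmul, skewMul_smul_left] at hk
    exact hk
  · funext m
    rw [skewMul_Cmul, skewMul_smul_left]
    exact (hI _).mp (hpq m) s hs

/-- Strong skew symmetry implies `R` itself is reversible. -/
lemma rev_of_strong {R : Type*} [Ring R] (σ : R →+* R) (h : StronglySkewSymmetric R σ)
    (a b : R) (hab : a * b = 0) : b * a = 0 := by
  have key := h 1 (C a) (C b) ?_
  · have hk := congrFun key 0
    have h1 : (1 : Polynomial R) = C 1 := by simp
    rw [h1, skewMul_C_left'] at hk
    simp only [one_mul] at hk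
    rw [skewMul_C_left] at hk
    simpa using hk
  · funext m
    have h1 : (1 : Polynomial R) = C 1 := by simp
    rw [h1, skewMul_C_left']
    simp only [one_mul]
    rw [skewMul_C_left]
    simp only [Pi.zero_apply]
    by_cases hm : m = 0
    · subst hm; simpa using hab
    · rw [coeff_C, if_neg hm, mul_zero]

theorem quotient_by_annihilator_stronglySkewSymmetric
    {R : Type*} [Ring R] (σ : R →+* R) (h : StronglySkewSymmetric R σ)
    (S : Set R) (I : Set R)
    (hI : (∀ c : R, c ∈ I ↔ ∀ s ∈ S, s * c = 0) ∨
          (∀ c : R, c ∈ I ↔ ∀ s ∈ S, c * s = 0))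
    (hσI : ∀ a ∈ I, σ a ∈ I) :
    StronglySkewSymmetricMod σ I := by
  rcases hI with hI | hI
  · exact right_ann_case σ h S I hI
  · refine right_ann_case σ h S I fun c => ?_
    rw [hI c]
    exact ⟨fun hc s hs => rev_of_strong σ h c s (hc s hs),
           fun hc s hs => rev_of_strong σ h s c (hc s hs)⟩
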